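/- arXiv:1206.6657 — 3 statements merged into one kernel-verified Lean document; each statement's English description precedes it below -/
import Mathlib

section
/- Let $P = \{a_1,\dots,a_p\} \subset \mathbb{C}^{\times}$ be distinct, $M \geq 1$, and define for each $a\in\mathbb{C}$ the $(Mp)\times M$ matrix $X(a) = \left(a^n \binom{n+m-2}{m-1}\right)_{1\leq n\leq Mp,\ 1\leq m\leq M}$. Then $\det\big[X(a_1)\ X(a_2)\ \cdots\ X(a_p)\big] = (a_1 a_2 \cdots a_p)^{M(M+1)/2} \prod_{i<j}(a_j - a_i)^{M^2}$. In particular this determinant is nonzero. -/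
open Finset Matrix

namespace Stmt6Aux

/-- Hockey stick: `∑_{t ≤ j} C(r+t, t) = C(r+j+1, j)`. -/
lemma hockey (r : ℕ) : ∀ j, ∑ t ∈ range (j+1), Nat.choose (r+t) t = Nat.choose (r+j+1) j := by
  intro j
  induction j with
  | zero => simp
  | succ j ih =>
    rw [Finset.sum_range_succ, ih]
    exact (Nat.choose_succ_succ (r+j+1) j).symm

/-- Pascal in the form we need, cast to ℂ. -/
lemma pascalC {n c : ℕ} (hn : 0 < n) (hc : 0 < c) :
    ((n + c).choose c : ℂ) = ((n-1+c).choose c : ℂ) + ((n-1+c).choose (c-1) : ℂ) := by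
  obtain ⟨n', rfl⟩ : ∃ n', n = n' + 1 := ⟨n - 1, by omega⟩
  obtain ⟨c', rfl⟩ : ∃ c', c = c' + 1 := ⟨c - 1, by omega⟩
  have h1 : n' + 1 + (c' + 1) = (n' + c' + 1) + 1 := by ring
  have h2 : n' + 1 - 1 + (c' + 1) = n' + c' + 1 := by omega
  rw [h1, h2, Nat.choose_succ_succ (n' + c' + 1) c']
  have h3 : c' + 1 - 1 = c' := by omega
  rw [h3]
  push_cast
  ring

def Mfun (v : ℕ → ℂ) (d : ℕ → ℕ) (n c : ℕ) : ℂ :=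
  v c ^ (n+1) * (Nat.choose (n + d c) (d c) : ℂ)

def Lfun (v : ℕ → ℂ) (n r' : ℕ) : ℂ :=
  if r' = n then 1 else if r' + 1 = n then -(v 0) else 0

def d2 (d : ℕ → ℕ) (c : ℕ) : ℕ := if d c = c then c - 1 else d c

def M2fun (v : ℕ → ℂ) (d : ℕ → ℕ) (n c : ℕ) : ℂ :=
  if c = 0 then (if n = 0 then 1 else 0)
  else if n = 0 then 0
  else v c ^ n * (Nat.choose (n - 1 + d2 d c) (d2 d c) : ℂ)

def Tfun (v : ℕ → ℂ) (d : ℕ → ℕ) (c' c : ℕ) : ℂ :=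
  if d c = c then (if c' ≤ c then v 0 else 0)
  else if c' = c then v c - v 0
  else if c' = 0 then v c
  else if c - d c ≤ c' ∧ c' < c then v c
  else 0

def Struct (N : ℕ) (v : ℕ → ℂ) (d : ℕ → ℕ) : Prop :=
  ∀ c, c < N → d c ≤ c ∧ (0 < d c → d (c-1) = d c - 1 ∧ v (c-1) = v c)

lemma struct_block {N : ℕ} {v : ℕ → ℂ} {d : ℕ → ℕ} (h : Struct N v d) {c : ℕ} (hc : c < N) :
    ∀ t, t ≤ d c → d (c - t) = d c - t ∧ v (c - t) = v c := by
  intro t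
  induction t with
  | zero => simp
  | succ t ih =>
    intro ht
    have h1 := ih (by omega)
    have hdc := (h c hc).1
    have hlt : c - t < N := by omega
    have h2 := (h (c - t) hlt).2 (by omega)
    have : c - (t+1) = (c - t) - 1 := by omega
    rw [this]
    refine ⟨by omega, ?_⟩
    rw [h2.2, h1.2]

end Stmt6Aux

namespace Stmt6Aux

lemma Lsum {N : ℕ} (v : ℕ → ℂ) (f : ℕ → ℂ) {n : ℕ} (hn : n < N) :
    ∑ r' ∈ range N, Lfun v n r' * f r'
      = f n - (if n = 0 then 0 else v 0 * f (n-1)) := by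
  have hsplit : ∀ r', Lfun v n r' * f r'
      = (if r' = n then f r' else 0) + (if r' + 1 = n then -(v 0) * f r' else 0) := by
    intro r'
    unfold Lfun
    split_ifs with h1 h2 <;> simp_all
  rw [Finset.sum_congr rfl fun r' _ => hsplit r', Finset.sum_add_distrib]
  rw [Finset.sum_ite_eq' (range N) n f]
  simp only [Finset.mem_range, hn, if_true]
  by_cases h0 : n = 0
  · subst h0; simp
  · have hcond : ∀ r', (r' + 1 = n) = (r' = n - 1) := fun r' => propext (by omega)
    simp only [hcond]
    rw [Finset.sum_ite_eq' (range N) (n-1) (fun r' => -(v 0) * f r')]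
    simp only [Finset.mem_range]
    rw [if_pos (by omega), if_neg h0]
    ring

end Stmt6Aux

namespace Stmt6Aux

lemma main_identity {N : ℕ} {v : ℕ → ℂ} {d : ℕ → ℕ} (h : Struct N v d)
    {n c : ℕ} (hn : n < N) (hc : c < N) :
    ∑ r' ∈ range N, Lfun v n r' * Mfun v d r' c
      = ∑ c' ∈ range N, M2fun v d n c' * Tfun v d c' c := by
  rw [Lsum v (fun r' => Mfun v d r' c) hn]
  have hdc := (h c hc).1
  by_cases hblk : d c = c
  · -- c is in the first block
    have hall : ∀ c' ≤ c, d c' = c' ∧ v c' = v c := by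
      intro c' hc'
      have := struct_block h hc (c - c') (by omega)
      have he : c - (c - c') = c' := by omega
      rw [he] at this
      exact ⟨by omega, this.2⟩
    have hv0 : v c = v 0 := by
      have := (hall 0 (by omega)).2; rw [this]
    -- simplify RHS
    have hT : ∀ c', Tfun v d c' c = if c' ≤ c then v 0 else 0 := by
      intro c'; unfold Tfun; rw [if_pos hblk]
    simp only [hT, mul_ite, mul_zero]
    rw [← Finset.sum_filter]
    have hfil : (range N).filter (fun c' => c' ≤ c) = range (c+1) := by
      ext x; simp only [Finset.mem_filter, Finset.mem_range]; omega
    rw [hfil]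
    by_cases n0 : n = 0
    · subst n0
      rw [Finset.sum_congr rfl (fun c' hc' => ?_), Finset.sum_ite_eq' (range (c+1)) 0
        (fun _ => (1:ℂ) * v 0)]
      · simp [Mfun, hblk, hv0]
      · show M2fun v d 0 c' * v 0 = if c' = 0 then 1 * v 0 else 0
        unfold M2fun
        split_ifs <;> simp_all
    · rw [if_neg n0]
      rw [Finset.sum_range_succ']
      have hg0 : M2fun v d n 0 * v 0 = 0 := by unfold M2fun; simp [n0]
      rw [hg0, add_zero]
      have hterm : ∀ i ∈ range c, M2fun v d n (i+1) * v 0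
          = v 0 ^ n * (Nat.choose (n-1+i) i : ℂ) * v 0 := by
        intro i hi
        have hi' : i + 1 ≤ c := by rw [Finset.mem_range] at hi; omega
        have h1 := hall (i+1) hi'
        unfold M2fun d2
        rw [if_neg (by omega), if_neg n0, if_pos h1.1, h1.2, hv0]
        simp
      rw [Finset.sum_congr rfl hterm]
      simp only [Mfun, hblk, hv0]
      have hn1 : n - 1 + 1 = n := by omega
      rw [hn1]
      by_cases c0 : c = 0
      · subst c0; simp; ring
      · have hhs : ∑ i ∈ range c, (Nat.choose (n-1+i) i : ℂ) = (Nat.choose (n-1+c) (c-1) : ℂ) := by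
          have := hockey (n-1) (c-1)
          have hc1 : c - 1 + 1 = c := by omega
          rw [hc1] at this
          have hc2 : n - 1 + (c-1) + 1 = n - 1 + c := by omega
          rw [hc2] at this
          rw [← this]
          push_cast
          ring
        rw [← Finset.sum_mul, ← Finset.mul_sum, hhs]
        have hp := pascalC (n := n) (c := c) (by omega) (by omega)
        rw [hp]
        ring
  · -- c is not in the first block
    have hlt : d c < c := by omega
    have hc1 : 0 < c := by omega
    have hpos : 0 < c - d c := by omega
    have hT : ∀ c', Tfun v d c' c
        = (if c' = c then v c - v 0 else 0) + (if c' = 0 then v c else 0)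
          + (if c - d c ≤ c' ∧ c' < c then v c else 0) := by
      intro c'
      unfold Tfun
      rw [if_neg hblk]
      split_ifs <;> first | omega | ring
    simp only [hT, mul_add, mul_ite, mul_zero]
    rw [Finset.sum_add_distrib, Finset.sum_add_distrib]
    rw [Finset.sum_ite_eq' (range N) c (fun c' => M2fun v d n c' * (v c - v 0))]
    rw [Finset.sum_ite_eq' (range N) 0 (fun c' => M2fun v d n c' * v c)]
    rw [if_pos (Finset.mem_range.2 hc), if_pos (Finset.mem_range.2 (by omega))]
    rw [← Finset.sum_filter]
    have hfil : (range N).filter (fun c' => c - d c ≤ c' ∧ c' < c) = Finset.Ico (c - d c) c := by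
      ext x; simp only [Finset.mem_filter, Finset.mem_range, Finset.mem_Ico]; omega
    rw [hfil, Finset.sum_Ico_eq_sum_range]
    have hsub : c - (c - d c) = d c := by omega
    rw [hsub]
    have hfacts : ∀ i ∈ range (d c), d (c - d c + i) = i ∧ v (c - d c + i) = v c := by
      intro i hi
      rw [Finset.mem_range] at hi
      have := struct_block h hc (d c - i) (by omega)
      have he : c - (d c - i) = c - d c + i := by omega
      rw [he] at this
      exact ⟨by omega, this.2⟩
    by_cases n0 : n = 0
    · subst n0
      have h1 : M2fun v d 0 c = 0 := by unfold M2fun; rw [if_neg (by omega)]; simp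
      have h2 : M2fun v d 0 0 = 1 := by unfold M2fun; simp
      have h3 : ∀ i ∈ range (d c), M2fun v d 0 (c - d c + i) * v c = 0 := by
        intro i hi
        rw [Finset.mem_range] at hi
        unfold M2fun
        rw [if_neg (by omega)]
        simp
      rw [Finset.sum_congr rfl h3, h1, h2]
      simp [Mfun]
    · have hMc : M2fun v d n c = v c ^ n * (Nat.choose (n-1+ d c) (d c) : ℂ) := by
        unfold M2fun d2
        rw [if_neg (by omega), if_neg n0, if_neg hblk]
      have hM0 : M2fun v d n 0 = 0 := by unfold M2fun; simp [n0]
      have hterm : ∀ i ∈ range (d c), M2fun v d n (c - d c + i) * v c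
          = v c ^ n * (Nat.choose (n-1+i) i : ℂ) * v c := by
        intro i hi
        have hf := hfacts i hi
        rw [Finset.mem_range] at hi
        unfold M2fun d2
        rw [if_neg (by omega), if_neg n0, if_neg (by omega), hf.1, hf.2]
      rw [Finset.sum_congr rfl hterm, hMc, hM0]
      simp only [Mfun, if_neg n0]
      have hn1 : n - 1 + 1 = n := by omega
      rw [hn1]
      by_cases dc0 : d c = 0
      · rw [dc0]; simp; ring
      · have hhs : ∑ i ∈ range (d c), (Nat.choose (n-1+i) i : ℂ)
            = (Nat.choose (n-1+ d c) (d c - 1) : ℂ) := by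
          have := hockey (n-1) (d c - 1)
          have hc1' : d c - 1 + 1 = d c := by omega
          rw [hc1'] at this
          have hc2 : n - 1 + (d c - 1) + 1 = n - 1 + d c := by omega
          rw [hc2] at this
          rw [← this]
          push_cast
          ring
        rw [← Finset.sum_mul, ← Finset.mul_sum, hhs]
        have hp := pascalC (n := n) (c := d c) (by omega) (by omega)
        rw [hp]
        ring
end Stmt6Aux

namespace Stmt6Aux

def Mmat (N : ℕ) (v : ℕ → ℂ) (d : ℕ → ℕ) : Matrix (Fin N) (Fin N) ℂ :=
  Matrix.of fun r c => Mfun v d (r:ℕ) (c:ℕ)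

def G (N : ℕ) (v : ℕ → ℂ) (d : ℕ → ℕ) : ℂ :=
  ∏ c ∈ range N, (v c ^ (d c + 1) * ∏ c' ∈ range (c - d c), (v c - v c'))

lemma det_L (N : ℕ) (v : ℕ → ℂ) :
    (Matrix.of fun r r' : Fin N => Lfun v (r:ℕ) (r':ℕ)).det = 1 := by
  rw [Matrix.det_of_lowerTriangular _ ?ht]
  case ht =>
    intro i j hij
    have : (i:ℕ) < (j:ℕ) := by simpa using hij
    show Lfun v (i:ℕ) (j:ℕ) = 0
    unfold Lfun
    rw [if_neg (by omega), if_neg (by omega)]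
  · apply Finset.prod_eq_one
    intro i _
    show Lfun v (i:ℕ) (i:ℕ) = 1
    unfold Lfun
    rw [if_pos rfl]

lemma det_T {N : ℕ} {v : ℕ → ℂ} {d : ℕ → ℕ} (h : Struct N v d) :
    (Matrix.of fun c' c : Fin N => Tfun v d (c':ℕ) (c:ℕ)).det
      = ∏ c ∈ range N, (if d c = c then v c else v c - v 0) := by
  rw [Matrix.det_of_upperTriangular ?ht]
  case ht =>
    intro i j hij
    simp only [id_eq] at hij
    have hlt : (j:ℕ) < (i:ℕ) := hij
    show Tfun v d (i:ℕ) (j:ℕ) = 0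
    unfold Tfun
    split_ifs <;> first | rfl | omega
  · rw [← Fin.prod_univ_eq_prod_range (fun c => if d c = c then v c else v c - v 0) N]
    apply Finset.prod_congr rfl
    intro i _
    show Tfun v d (i:ℕ) (i:ℕ) = _
    have hv0 : d (i:ℕ) = (i:ℕ) → v (i:ℕ) = v 0 := by
      intro hd
      have := (struct_block h i.isLt (i:ℕ) (le_of_eq hd.symm)).2
      simpa using this.symm
    unfold Tfun
    split_ifs with h1 h2 <;> first | omega | rfl | (rw [hv0 h1])

lemma struct_succ {N : ℕ} {v : ℕ → ℂ} {d : ℕ → ℕ} (h : Struct (N+1) v d) :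
    Struct N (fun k => v (k+1)) (fun k => d2 d (k+1)) := by
  intro c hc
  simp only [d2]
  have h1 := h (c+1) (by omega)
  have h1a := h1.1
  constructor
  · split_ifs <;> omega
  · intro hdpos
    by_cases hb : d (c+1) = c+1
    · rw [if_pos hb] at hdpos
      have hc0 : 0 < c := by omega
      have hcc : c - 1 + 1 = c := by omega
      have h2 := h1.2 (by omega)
      rw [show c+1-1 = c by omega] at h2
      have h2a := h2.1
      have hdc : d c = c := by omega
      rw [hcc, if_pos hdc, if_pos hb]
      exact ⟨by omega, h2.2⟩
    · rw [if_neg hb] at hdpos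
      have hc0 : 0 < c := by omega
      have hcc : c - 1 + 1 = c := by omega
      have h2 := h1.2 (by omega)
      rw [show c+1-1 = c by omega] at h2
      have h2a := h2.1
      have hdc : ¬ d c = c := by omega
      rw [hcc, if_neg hdc, if_neg hb]
      exact ⟨by omega, h2.2⟩

lemma det_M2 {N : ℕ} (v : ℕ → ℂ) (d : ℕ → ℕ) :
    (Matrix.of fun r c : Fin (N+1) => M2fun v d (r:ℕ) (c:ℕ)).det
      = (Mmat N (fun k => v (k+1)) (fun k => d2 d (k+1))).det := by
  rw [Matrix.det_succ_row_zero]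
  rw [Finset.sum_eq_single 0]
  · have h00 : (Matrix.of fun r c : Fin (N+1) => M2fun v d (r:ℕ) (c:ℕ)) 0 0 = 1 := by
      show M2fun v d 0 0 = 1
      unfold M2fun; simp
    rw [h00]
    have hsub : (Matrix.of fun r c : Fin (N+1) => M2fun v d (r:ℕ) (c:ℕ)).submatrix
        Fin.succ ((0 : Fin (N+1)).succAbove) = Mmat N (fun k => v (k+1)) (fun k => d2 d (k+1)) := by
      ext r c
      show M2fun v d ((Fin.succ r : Fin (N+1)):ℕ) (((0:Fin (N+1)).succAbove c :ℕ)) = _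
      rw [Fin.succAbove_zero]
      show M2fun v d (r+1) (c+1) = Mfun (fun k => v (k+1)) (fun k => d2 d (k+1)) (r:ℕ) (c:ℕ)
      unfold M2fun Mfun
      rw [if_neg (by omega), if_neg (by omega)]
      simp
    rw [hsub]
    simp
  · intro j _ hj
    have : (Matrix.of fun r c : Fin (N+1) => M2fun v d (r:ℕ) (c:ℕ)) 0 j = 0 := by
      show M2fun v d 0 (j:ℕ) = 0
      unfold M2fun
      rw [if_neg (Fin.val_ne_zero_iff.mpr hj)]
      simp
    simp [this]
  · intro habs
    exact absurd (Finset.mem_univ 0) habs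

lemma G_rec {N : ℕ} {v : ℕ → ℂ} {d : ℕ → ℕ} (h : Struct (N+1) v d) :
    G (N+1) v d
      = (∏ c ∈ range (N+1), (if d c = c then v c else v c - v 0))
        * G N (fun k => v (k+1)) (fun k => d2 d (k+1)) := by
  unfold G
  rw [Finset.prod_range_succ' (fun c => v c ^ (d c + 1) * ∏ c' ∈ range (c - d c), (v c - v c'))]
  rw [Finset.prod_range_succ' (fun c => if d c = c then v c else v c - v 0)]
  have hd0 : d 0 = 0 := by have := (h 0 (by omega)).1; omega
  have hF0 : v 0 ^ (d 0 + 1) * ∏ c' ∈ range (0 - d 0), (v 0 - v c') = v 0 := by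
    rw [hd0]; simp
  have hT0 : (if d 0 = 0 then v 0 else v 0 - v 0) = v 0 := by rw [if_pos hd0]
  rw [hF0, hT0]
  have hmain : ∀ c ∈ range N,
      v (c+1) ^ (d (c+1) + 1) * ∏ c' ∈ range (c + 1 - d (c+1)), (v (c+1) - v c')
        = (if d (c+1) = c+1 then v (c+1) else v (c+1) - v 0)
          * ((fun k => v (k+1)) c ^ ((fun k => d2 d (k+1)) c + 1)
            * ∏ c' ∈ range (c - (fun k => d2 d (k+1)) c),
                ((fun k => v (k+1)) c - (fun k => v (k+1)) c')) := by
    intro c hc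
    rw [Finset.mem_range] at hc
    have hdc1 := (h (c+1) (by omega)).1
    simp only [d2]
    by_cases hb : d (c+1) = c+1
    · rw [if_pos hb, if_pos hb, hb]
      simp only [Nat.add_sub_cancel, Nat.sub_self, Finset.range_zero, Finset.prod_empty, mul_one]
      rw [← pow_succ']
    · rw [if_neg hb, if_neg hb]
      have hks : c + 1 - d (c+1) = (c - d (c+1)) + 1 := by omega
      rw [hks, Finset.prod_range_succ' (fun c' => v (c+1) - v c')]
      ring
  rw [Finset.prod_congr rfl hmain, Finset.prod_mul_distrib]
  ring

lemma key : ∀ (N : ℕ) (v : ℕ → ℂ) (d : ℕ → ℕ), Struct N v d → (Mmat N v d).det = G N v d := by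
  intro N
  induction N with
  | zero => intro v d _; simp [Mmat, G, Matrix.det_fin_zero]
  | succ N ih =>
    intro v d h
    have hmul : (Matrix.of fun r r' : Fin (N+1) => Lfun v (r:ℕ) (r':ℕ)) * Mmat (N+1) v d
        = (Matrix.of fun r c : Fin (N+1) => M2fun v d (r:ℕ) (c:ℕ))
          * (Matrix.of fun c' c : Fin (N+1) => Tfun v d (c':ℕ) (c:ℕ)) := by
      ext r c
      rw [Matrix.mul_apply, Matrix.mul_apply]
      show ∑ k : Fin (N+1), Lfun v (r:ℕ) (k:ℕ) * Mfun v d (k:ℕ) (c:ℕ)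
        = ∑ k : Fin (N+1), M2fun v d (r:ℕ) (k:ℕ) * Tfun v d (k:ℕ) (c:ℕ)
      rw [Fin.sum_univ_eq_sum_range (fun k => Lfun v (r:ℕ) k * Mfun v d k (c:ℕ))]
      rw [Fin.sum_univ_eq_sum_range (fun k => M2fun v d (r:ℕ) k * Tfun v d k (c:ℕ))]
      exact main_identity h r.isLt c.isLt
    have hdet := congrArg Matrix.det hmul
    rw [Matrix.det_mul, Matrix.det_mul, det_L, one_mul, det_T h, det_M2] at hdet
    rw [hdet, ih _ _ (struct_succ h), G_rec h]
    ring

end Stmt6Aux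

namespace Stmt6Aux

lemma prod_range_mul {f : ℕ → ℂ} (k M : ℕ) :
    ∏ c ∈ range (k * M), f c = ∏ i ∈ range k, ∏ j ∈ range M, f (i * M + j) := by
  induction k with
  | zero => simp
  | succ k ih =>
    have hk : (k+1) * M = k * M + M := by ring
    rw [hk, Finset.prod_range_add, ih, Finset.prod_range_succ]

lemma gauss (M : ℕ) : ∑ j ∈ range M, (j+1) = M * (M+1) / 2 := by
  have e1 : ∑ j ∈ range (M+1), j = ∑ j ∈ range M, (j+1) := by
    rw [Finset.sum_range_succ']; simp
  have e2 := Finset.sum_range_id_mul_two (M+1)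
  have e3 : (M+1) * ((M+1) - 1) = M * (M+1) := by simp [Nat.mul_comm]
  omega

end Stmt6Aux

namespace Stmt6Aux

variable {p : ℕ}

def Afun (hp0 : 0 < p) (a : Fin p → ℂ) : ℕ → ℂ := fun n => a ⟨n % p, Nat.mod_lt n hp0⟩

def vfun (hp0 : 0 < p) (a : Fin p → ℂ) (M : ℕ) : ℕ → ℂ := fun n => Afun hp0 a (n / M)

def dfun (M : ℕ) : ℕ → ℕ := fun n => n % M

lemma Afun_coe (hp0 : 0 < p) (a : Fin p → ℂ) (i : Fin p) : a i = Afun hp0 a (i:ℕ) := by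
  unfold Afun
  congr 1
  exact (Fin.ext (Nat.mod_eq_of_lt i.isLt)).symm

lemma vfun_apply (hp0 : 0 < p) (a : Fin p → ℂ) {M : ℕ} (hM0 : 0 < M) (i j : ℕ) (hj : j < M) :
    vfun hp0 a M (i * M + j) = Afun hp0 a i := by
  unfold vfun
  congr 1
  rw [show i * M + j = M * i + j by ring, Nat.mul_add_div hM0,
    Nat.div_eq_of_lt hj, Nat.add_zero]

lemma dfun_apply {M : ℕ} (i j : ℕ) (hj : j < M) : dfun M (i * M + j) = j := by
  unfold dfun
  rw [show i * M + j = M * i + j by ring, Nat.mul_add_mod]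
  exact Nat.mod_eq_of_lt hj

lemma struct_inst (hp0 : 0 < p) (a : Fin p → ℂ) {M : ℕ} (hM0 : 0 < M) :
    Struct (p * M) (vfun hp0 a M) (dfun M) := by
  intro c _
  unfold dfun vfun
  refine ⟨Nat.mod_le c M, ?_⟩
  intro hpos
  have h1 : M * (c / M) + c % M = c := Nat.div_add_mod c M
  have h2 : c % M < M := Nat.mod_lt c hM0
  have h3 : c - 1 = M * (c / M) + (c % M - 1) := by omega
  constructor
  · rw [h3, Nat.mul_add_mod]
    exact Nat.mod_eq_of_lt (by omega)
  · have hdiv : (c-1)/M = c/M := by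
      rw [h3, Nat.mul_add_div hM0, Nat.div_eq_of_lt (show c % M - 1 < M by omega),
        Nat.add_zero]
    rw [hdiv]

end Stmt6Aux

open Finset Stmt6Aux

/-- Block (confluent-Vandermonde-type) determinant identity. -/
theorem stmt_6 (M p : ℕ) (hM : 1 ≤ M) (hp : 1 ≤ p) (a : Fin p → ℂ)
    (ha : ∀ i, a i ≠ 0) (hinj : Function.Injective a) :
    (Matrix.det (Matrix.of fun rc ij : Fin p × Fin M =>
        a ij.1 ^ ((rc.1 : ℕ) * M + (rc.2 : ℕ) + 1) *
          (Nat.choose ((rc.1 : ℕ) * M + (rc.2 : ℕ) + (ij.2 : ℕ)) (ij.2 : ℕ) : ℂ)) =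
      (∏ i, a i) ^ (M * (M + 1) / 2) *
        ∏ i : Fin p, ∏ j : Fin p, (if i < j then (a j - a i) ^ (M ^ 2) else 1)) ∧
    Matrix.det (Matrix.of fun rc ij : Fin p × Fin M =>
        a ij.1 ^ ((rc.1 : ℕ) * M + (rc.2 : ℕ) + 1) *
          (Nat.choose ((rc.1 : ℕ) * M + (rc.2 : ℕ) + (ij.2 : ℕ)) (ij.2 : ℕ) : ℂ)) ≠ 0 := by
  have hp0 : 0 < p := hp
  have hM0 : 0 < M := hM
  have hmatch : Matrix.det (Matrix.of fun rc ij : Fin p × Fin M =>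
        a ij.1 ^ ((rc.1 : ℕ) * M + (rc.2 : ℕ) + 1) *
          (Nat.choose ((rc.1 : ℕ) * M + (rc.2 : ℕ) + (ij.2 : ℕ)) (ij.2 : ℕ) : ℂ))
      = (Mmat (p*M) (vfun hp0 a M) (dfun M)).det := by
    rw [← Matrix.det_submatrix_equiv_self finProdFinEquiv (Mmat (p*M) (vfun hp0 a M) (dfun M))]
    congr 1
    ext rc ij
    show a ij.1 ^ ((rc.1 : ℕ) * M + (rc.2 : ℕ) + 1) *
          (Nat.choose ((rc.1 : ℕ) * M + (rc.2 : ℕ) + (ij.2 : ℕ)) (ij.2 : ℕ) : ℂ)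
      = Mfun (vfun hp0 a M) (dfun M)
          ((finProdFinEquiv rc : Fin (p*M)) : ℕ) ((finProdFinEquiv ij : Fin (p*M)) : ℕ)
    have hval : ∀ x : Fin p × Fin M,
        ((finProdFinEquiv x : Fin (p*M)) : ℕ) = (x.1:ℕ) * M + (x.2:ℕ) := by
      intro x
      rw [finProdFinEquiv_apply_val]
      ring
    rw [hval, hval]
    unfold Mfun
    rw [vfun_apply hp0 a hM0 _ _ ij.2.isLt, dfun_apply _ _ ij.2.isLt, Afun_coe hp0 a ij.1]
  have hG : G (p*M) (vfun hp0 a M) (dfun M)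
      = (∏ i ∈ range p, Afun hp0 a i ^ (M*(M+1)/2))
        * ∏ i ∈ range p, ∏ i' ∈ range i, (Afun hp0 a i - Afun hp0 a i')^(M^2) := by
    unfold G
    rw [prod_range_mul p M, ← Finset.prod_mul_distrib]
    apply Finset.prod_congr rfl
    intro i _
    have hinner : ∀ j ∈ range M,
        vfun hp0 a M (i*M+j) ^ (dfun M (i*M+j) + 1)
          * ∏ c' ∈ range ((i*M+j) - dfun M (i*M+j)), (vfun hp0 a M (i*M+j) - vfun hp0 a M c')
        = Afun hp0 a i ^ (j+1) * ∏ c' ∈ range (i*M), (Afun hp0 a i - vfun hp0 a M c') := by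
      intro j hj
      rw [Finset.mem_range] at hj
      rw [vfun_apply hp0 a hM0 i j hj, dfun_apply i j hj, Nat.add_sub_cancel]
    rw [Finset.prod_congr rfl hinner, Finset.prod_mul_distrib, Finset.prod_const,
      Finset.card_range]
    have hin2 : ∏ c' ∈ range (i*M), (Afun hp0 a i - vfun hp0 a M c')
        = ∏ i' ∈ range i, (Afun hp0 a i - Afun hp0 a i')^M := by
      rw [prod_range_mul i M]
      apply Finset.prod_congr rfl
      intro i' _
      rw [Finset.prod_congr rfl
        (fun j' hj' => by rw [vfun_apply hp0 a hM0 i' j' (Finset.mem_range.1 hj')]),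
        Finset.prod_const, Finset.card_range]
    rw [hin2, Finset.prod_pow_eq_pow_sum, gauss]
    congr 1
    rw [← Finset.prod_pow]
    apply Finset.prod_congr rfl
    intro i' _
    rw [← pow_mul, sq]
  have hRHS : (∏ i, a i) ^ (M * (M + 1) / 2) *
        ∏ i : Fin p, ∏ j : Fin p, (if i < j then (a j - a i) ^ (M ^ 2) else 1)
      = (∏ i ∈ range p, Afun hp0 a i ^ (M*(M+1)/2))
        * ∏ i ∈ range p, ∏ i' ∈ range i, (Afun hp0 a i - Afun hp0 a i')^(M^2) := by
    congr 1
    · rw [← Finset.prod_pow]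
      rw [Finset.prod_congr rfl (fun i _ => by rw [Afun_coe hp0 a i])]
      exact Fin.prod_univ_eq_prod_range (fun n => Afun hp0 a n ^ (M*(M+1)/2)) p
    · rw [Finset.prod_comm]
      rw [← Fin.prod_univ_eq_prod_range
        (fun j => ∏ i' ∈ range j, (Afun hp0 a j - Afun hp0 a i')^(M^2)) p]
      apply Finset.prod_congr rfl
      intro j _
      have hpt : ∀ i : Fin p, (if i < j then (a j - a i) ^ (M^2) else 1)
          = (fun n => if n < (j:ℕ) then (Afun hp0 a (j:ℕ) - Afun hp0 a n)^(M^2) else 1) (i:ℕ) := by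
        intro i
        simp only
        rw [Afun_coe hp0 a i, Afun_coe hp0 a j]
        exact if_congr Fin.lt_def rfl rfl
      rw [Finset.prod_congr rfl (fun i _ => hpt i),
        Fin.prod_univ_eq_prod_range
          (fun n => if n < (j:ℕ) then (Afun hp0 a (j:ℕ) - Afun hp0 a n)^(M^2) else 1) p,
        ← Finset.prod_filter]
      congr 1
      ext x
      simp only [Finset.mem_filter, Finset.mem_range]
      have := j.isLt
      omega
  have hmain : Matrix.det (Matrix.of fun rc ij : Fin p × Fin M =>
        a ij.1 ^ ((rc.1 : ℕ) * M + (rc.2 : ℕ) + 1) *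
          (Nat.choose ((rc.1 : ℕ) * M + (rc.2 : ℕ) + (ij.2 : ℕ)) (ij.2 : ℕ) : ℂ)) =
      (∏ i, a i) ^ (M * (M + 1) / 2) *
        ∏ i : Fin p, ∏ j : Fin p, (if i < j then (a j - a i) ^ (M ^ 2) else 1) := by
    rw [hmatch, key _ _ _ (struct_inst hp0 a hM0), hG, hRHS]
  refine ⟨hmain, ?_⟩
  rw [hmain]
  apply mul_ne_zero
  · exact pow_ne_zero _ (Finset.prod_ne_zero_iff.2 fun i _ => ha i)
  · apply Finset.prod_ne_zero_iff.2
    intro i _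
    apply Finset.prod_ne_zero_iff.2
    intro j _
    by_cases hij : i < j
    · rw [if_pos hij]
      apply pow_ne_zero
      rw [sub_ne_zero]
      intro heq
      exact absurd (hinj heq) (by intro h; rw [h] at hij; exact lt_irrefl _ hij)
    · rw [if_neg hij]
      exact one_ne_zero
end

section
/- Derivation of the finite-$P$ commutation formula: suppose elements $x, y$ of a filtered associative algebra satisfy, for all $m, n \geq 0$ with shift notation $x_m, y_n$ (where $x_m \in F_m$, $y_n \in F_n$ for a multiplicative decreasing filtration $(F_n)$ with trivial intersection): $(a - bc)x_m y_n + a x_{m+1} y_n - bc\, x_m y_{n+1} = (ac - b) y_n x_m + ac\, y_n x_{m+1} - b\, y_{n+1} x_m$, where $a, b, c \in \mathbb{C}^{\times}$ with $a \neq bc$. Then in the completion, $x_m y_n$ equals the convergent series $y_n x_m \frac{b - ac}{bc - a} + \sum_{p=1}^{\infty}\sum_{r=0}^{p} y_{n+r} x_{m+p-r} \cdot \frac{c - c^{-1}}{bc - a}\cdot\frac{(p-r)bc + ra}{p}\cdot(-1)^{r+1}\binom{p}{r}\frac{(bc)^r a^{p-r}}{(bc-a)^p}$. -/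
private lemma pow_aux (a e : ℂ) (h : e - a ≠ 0) (r k : ℕ) :
    (-1:ℂ)^(r+1) * e^r * a^k / (e - a)^(r+k) = -((e/(a-e))^r * (a/(e-a))^k) := by
  have e1 : (e/(a-e))^r = (-1:ℂ)^r * e^r / (e-a)^r := by
    rw [show a - e = -(e - a) by ring, div_neg, neg_pow, div_pow, mul_div_assoc]
  rw [e1, div_pow, pow_add, pow_succ]
  ring

private lemma sum_shift_aux {M : Type*} [AddCommGroup M] [Module ℂ M] (α β : ℂ)
    (g : ℕ → ℕ → M) (N : ℕ) :
    (∑ r ∈ Finset.range (N+1), (α * ((N.choose r : ℂ) * α^(N-r) * β^r)) • g (N+1-r) r)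
      + ∑ r ∈ Finset.range (N+1), (β * ((N.choose r : ℂ) * α^(N-r) * β^r)) • g (N-r) (r+1)
    = ∑ r ∈ Finset.range (N+2), (((N+1).choose r : ℂ) * α^(N+1-r) * β^r) • g (N+1-r) r := by
  rw [Finset.sum_range_succ' (fun r => (((N+1).choose r : ℂ) * α^(N+1-r) * β^r) • g (N+1-r) r)]
  have hP : ∀ r ∈ Finset.range (N+1),
      ((((N+1).choose (r+1) : ℂ)) * α^(N+1-(r+1)) * β^(r+1)) • g (N+1-(r+1)) (r+1)
      = (α * ((N.choose (r+1) : ℂ) * α^(N-(r+1)) * β^(r+1))) • g (N-r) (r+1)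
        + (β * ((N.choose r : ℂ) * α^(N-r) * β^r)) • g (N-r) (r+1) := by
    intro r hr
    have hrN : r ≤ N := Nat.lt_succ_iff.mp (Finset.mem_range.mp hr)
    have e1 : N + 1 - (r+1) = N - r := by omega
    rw [e1, ← add_smul]
    congr 1
    rcases Nat.lt_or_ge r N with hlt | hge
    · have e2 : N - r = (N - (r+1)) + 1 := by omega
      have e3 : ((N+1).choose (r+1) : ℂ) = (N.choose r : ℂ) + (N.choose (r+1) : ℂ) := by
        rw [Nat.choose_succ_succ]; push_cast; ring
      rw [e3, e2, pow_succ]; ring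
    · have e2 : r = N := le_antisymm hrN hge
      subst e2
      simp [Nat.choose_succ_self, Nat.sub_self, pow_succ]
      ring
  rw [Finset.sum_congr rfl hP, Finset.sum_add_distrib]
  have hL : ∑ r ∈ Finset.range (N+1), (α * ((N.choose r : ℂ) * α^(N-r) * β^r)) • g (N+1-r) r
      = (∑ r ∈ Finset.range (N+1), (α * ((N.choose (r+1) : ℂ) * α^(N-(r+1)) * β^(r+1))) • g (N-r) (r+1))
        + (α * ((N.choose 0 : ℂ) * α^(N-0) * β^0)) • g (N+1-0) 0 := by
    rw [Finset.sum_range_succ' (fun r => (α * ((N.choose r : ℂ) * α^(N-r) * β^r)) • g (N+1-r) r)]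
    congr 1
    rw [Finset.sum_range_succ]
    have h0 : (α * ((N.choose (N+1) : ℂ) * α^(N-(N+1)) * β^(N+1))) • g (N-N) (N+1) = 0 := by
      simp [Nat.choose_succ_self]
    rw [h0, add_zero]
    apply Finset.sum_congr rfl
    intro r hr
    have e : N + 1 - (r+1) = N - r := by omega
    rw [e]
  rw [hL]
  have e4 : (α * ((N.choose 0 : ℂ) * α^(N-0) * β^0)) • g (N+1-0) 0
      = (((N+1).choose 0 : ℂ) * α^(N+1-0) * β^0) • g (N+1-0) 0 := by
    simp [pow_succ]; ring_nf
  rw [e4]; abel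

private lemma coef0 (a b c : ℂ) (hc : c ≠ 0) (hd : a - b*c ≠ 0) (hd' : b*c - a ≠ 0) (q : ℕ) :
    (((c - c⁻¹) / (b * c - a)) * ((((((q+1) : ℕ) : ℂ) - ((0 : ℕ) : ℂ)) * (b * c) + ((0 : ℕ) : ℂ) * a) / (((q+1) : ℕ) : ℂ)) * ((-1 : ℂ) ^ (0 + 1) * (Nat.choose (q+1) 0 : ℂ) * (b * c) ^ 0 * a ^ ((q+1) - 0) / (b * c - a) ^ (q+1)))
    = (a * b * (1 - c ^ 2) / (a - b * c) ^ 2) * ((Nat.choose q 0 : ℂ) * (a / (b * c - a)) ^ (q - 0) * (b * c / (a - b * c)) ^ 0) := by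
  have hpj : ((q+1 : ℕ) : ℂ) ≠ 0 := Nat.cast_ne_zero.mpr (Nat.succ_ne_zero q)
  have hp := pow_aux a (b*c) hd' 0 (q+1)
  simp only [pow_zero, one_mul, mul_one, zero_add, pow_one, Nat.zero_add] at hp
  simp only [Nat.choose_zero_right, Nat.cast_one, Nat.cast_zero, Nat.sub_zero, Nat.cast_ofNat,
    zero_mul, add_zero, sub_zero, pow_zero, mul_one, one_mul]
  have hp2 : (-1:ℂ) ^ (0+1) * a ^ (q+1) / (b*c-a) ^ (q+1) = -((a/(b*c-a))^q * (a/(b*c-a))) := by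
    rw [← pow_succ]
    simpa using hp
  rw [hp2, mul_comm ((q+1:ℕ):ℂ) (b*c), mul_div_assoc, div_self hpj, mul_one]
  generalize (a/(b*c-a))^q = X
  field_simp
  ring

private lemma coef2 (a b c : ℂ) (ha : a ≠ 0) (hb : b ≠ 0) (hc : c ≠ 0)
    (hd : a - b*c ≠ 0) (hd' : b*c - a ≠ 0) (q r : ℕ) (hrq : r ≤ q) :
    (((c - c⁻¹) / (b * c - a)) * ((((((q+1) : ℕ) : ℂ) - (((r+1) : ℕ) : ℂ)) * (b * c) + (((r+1) : ℕ) : ℂ) * a) / (((q+1) : ℕ) : ℂ)) * ((-1 : ℂ) ^ ((r+1) + 1) * (Nat.choose (q+1) (r+1) : ℂ) * (b * c) ^ (r+1) * a ^ ((q+1) - (r+1)) / (b * c - a) ^ (q+1)))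
    = (a * b * (1 - c ^ 2) / (a - b * c) ^ 2) * (((Nat.choose q (r+1) : ℂ) * (a / (b * c - a)) ^ (q - (r+1)) * (b * c / (a - b * c)) ^ (r+1)) - ((Nat.choose q r : ℂ) * (a / (b * c - a)) ^ (q - r) * (b * c / (a - b * c)) ^ r)) := by
  obtain ⟨k, rfl⟩ : ∃ k, q = r + k := ⟨q - r, by omega⟩
  rcases k with _ | k
  · -- k = 0 : q = r
    simp only [Nat.add_zero]
    have hpj : ((r+1 : ℕ) : ℂ) ≠ 0 := Nat.cast_ne_zero.mpr (Nat.succ_ne_zero r)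
    have hp := pow_aux a (b*c) hd' (r+1) 0
    simp only [pow_zero, mul_one, add_zero] at hp
    simp only [Nat.choose_self, Nat.choose_succ_self, Nat.cast_one, Nat.cast_zero, Nat.sub_self,
      pow_zero, zero_mul, one_mul, mul_one, sub_self, zero_add]
    rw [show ((-1:ℂ)^(r+1+1) * (b*c)^(r+1) / (b*c-a)^(r+1))
        = -((b*c/(a-b*c))^(r+1)) from hp]
    rw [mul_comm ((r+1:ℕ):ℂ) a, mul_div_assoc, div_self hpj, mul_one, pow_succ]
    generalize (b*c/(a-b*c))^r = B
    rw [show a - b*c = -(b*c-a) by ring]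
    field_simp
    ring
  · -- k+1 : q = r + (k+1)
    have hp := pow_aux a (b*c) hd' (r+1) (k+1)
    rw [show (r+1)+(k+1) = r+(k+1)+1 from by omega] at hp
    have hch1 : ((r+(k+1)+1 : ℕ) : ℂ) * (Nat.choose (r+(k+1)) r : ℂ)
        = (Nat.choose (r+(k+1)+1) (r+1) : ℂ) * ((r+1 : ℕ) : ℂ) := by
      exact_mod_cast congrArg (Nat.cast (R := ℂ)) (Nat.add_one_mul_choose_eq (r+(k+1)) r)
    have hch2 : (Nat.choose (r+(k+1)) (r+1) : ℂ) * ((r+(k+1)+1 : ℕ) : ℂ)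
        = (Nat.choose (r+(k+1)+1) (r+1) : ℂ) * ((k+1 : ℕ) : ℂ) := by
      have h2 := Nat.choose_mul_succ_eq (r+(k+1)) (r+1)
      rw [show r+(k+1)+1 - (r+1) = k+1 from by omega] at h2
      exact_mod_cast congrArg (Nat.cast (R := ℂ)) h2
    have hP : ((r+(k+1)+1 : ℕ) : ℂ) ≠ 0 := Nat.cast_ne_zero.mpr (by omega)
    rw [show r+(k+1)+1 - (r+1) = k+1 from by omega, show r+(k+1) - (r+1) = k from by omega,
      show r+(k+1) - r = k+1 from by omega]
    have key3 : ((-1 : ℂ) ^ (r+1+1) * (Nat.choose (r+(k+1)+1) (r+1) : ℂ) * (b * c) ^ (r+1)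
          * a ^ (k+1) / (b * c - a) ^ (r+(k+1)+1))
        = (Nat.choose (r+(k+1)+1) (r+1) : ℂ)
            * -((b*c/(a-b*c))^r * (b*c/(a-b*c)) * ((a/(b*c-a))^k * (a/(b*c-a)))) := by
      calc ((-1 : ℂ) ^ (r+1+1) * (Nat.choose (r+(k+1)+1) (r+1) : ℂ) * (b * c) ^ (r+1)
          * a ^ (k+1) / (b * c - a) ^ (r+(k+1)+1))
          = (Nat.choose (r+(k+1)+1) (r+1) : ℂ)
            * ((-1:ℂ)^(r+1+1) * (b*c)^(r+1) * a^(k+1) / (b*c-a)^(r+(k+1)+1)) := by ring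
        _ = (Nat.choose (r+(k+1)+1) (r+1) : ℂ)
            * -((b*c/(a-b*c))^(r+1) * (a/(b*c-a))^(k+1)) := by rw [hp]
        _ = _ := by rw [pow_succ (b*c/(a-b*c)) r, pow_succ (a/(b*c-a)) k]
    rw [key3]
    have hs : (Nat.choose (r+(k+1)) (r+1) : ℂ)
        = (Nat.choose (r+(k+1)+1) (r+1) : ℂ) * ((k+1 : ℕ) : ℂ) / ((r+(k+1)+1 : ℕ) : ℂ) := by
      rw [eq_div_iff hP]
      linear_combination hch2
    have ht : (Nat.choose (r+(k+1)) r : ℂ)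
        = (Nat.choose (r+(k+1)+1) (r+1) : ℂ) * ((r+1 : ℕ) : ℂ) / ((r+(k+1)+1 : ℕ) : ℂ) := by
      rw [eq_div_iff hP]
      linear_combination hch1
    rw [hs, ht, pow_succ (a/(b*c-a)) k, pow_succ (b*c/(a-b*c)) r]
    have hP' := hP
    push_cast at hP' ⊢
    generalize (b*c/(a-b*c))^r = B
    generalize (a/(b*c-a))^k = A
    rw [show a - b*c = -(b*c-a) by ring]
    field_simp
    ring

/-- Abstract form of the reordering formula (Proposition 5.1 of the paper): in a
filtered topological `ℂ`-algebra whose filtration `F` is a neighbourhood basis of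
`0`, if `x m ∈ F m`, `y n ∈ F n` satisfy the quadratic relation with parameters
`a, b, c ∈ ℂˣ`, `a ≠ bc`, then `x m · y n` is the sum of the convergent series
`((b - ac)/(bc - a)) yₙ xₘ + ∑_{p ≥ 1} ∑_{r=0}^{p} y_{n+r} x_{m+p-r} ·
((c - c⁻¹)/(bc - a)) · (((p-r)bc + ra)/p) · (-1)^{r+1} C(p,r) (bc)^r a^{p-r}/(bc-a)^p`. -/
theorem stmt_14 (A : Type*) [Ring A] [Algebra ℂ A] [TopologicalSpace A]
    [IsTopologicalRing A]
    (F : ℕ → Submodule ℂ A)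
    (hbasis : Filter.HasBasis (nhds (0 : A)) (fun _ : ℕ => True) (fun n => (F n : Set A)))
    (hmono : ∀ m n, m ≤ n → F n ≤ F m)
    (hmul : ∀ m n, ∀ u ∈ F m, ∀ v ∈ F n, u * v ∈ F (m + n))
    (hint : (⨅ n : ℕ, F (n + 1)) = ⊥)
    (a b c : ℂ) (ha : a ≠ 0) (hb : b ≠ 0) (hc : c ≠ 0) (hne : a ≠ b * c)
    (x y : ℕ → A) (hx : ∀ m, x m ∈ F m) (hy : ∀ n, y n ∈ F n)
    (hrel : ∀ m n : ℕ,
      (a - b * c) • (x m * y n) + a • (x (m + 1) * y n) - (b * c) • (x m * y (n + 1))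
        = (a * c - b) • (y n * x m) + (a * c) • (y n * x (m + 1)) - b • (y (n + 1) * x m)) :
    ∀ m n : ℕ, Filter.Tendsto (fun N : ℕ =>
        ((b - a * c) / (b * c - a)) • (y n * x m) +
          ∑ p ∈ Finset.Icc 1 N, ∑ r ∈ Finset.range (p + 1),
            (((c - c⁻¹) / (b * c - a)) * ((((p : ℂ) - (r : ℂ)) * (b * c) + (r : ℂ) * a) / (p : ℂ)) *
                ((-1 : ℂ) ^ (r + 1) * (Nat.choose p r : ℂ) * (b * c) ^ r * a ^ (p - r) /
                  (b * c - a) ^ p)) •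
              (y (n + r) * x (m + p - r)))
      Filter.atTop (nhds (x m * y n)) := by
  intro m n
  have hd : a - b * c ≠ 0 := sub_ne_zero.mpr hne
  have hd' : b * c - a ≠ 0 := sub_ne_zero.mpr (Ne.symm hne)
  -- Step lemma
  have hstep : ∀ i j : ℕ, (x i * y j - ((a * c - b) / (a - b * c)) • (y j * x i))
      = ((a * b * (1 - c ^ 2) / (a - b * c) ^ 2) • (y j * x (i+1)) - (a * b * (1 - c ^ 2) / (a - b * c) ^ 2) • (y (j+1) * x i))
        + ((a / (b * c - a)) • (x (i+1) * y j - ((a * c - b) / (a - b * c)) • (y j * x (i+1))) + (b * c / (a - b * c)) • (x i * y (j+1) - ((a * c - b) / (a - b * c)) • (y (j+1) * x i))) := by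
    intro i j
    have h := hrel i j
    have h3 : (a - b*c) • (x i * y j) = (a*c-b) • (y j * x i) + (a*c) • (y j * x (i+1))
        + (-b) • (y (j+1) * x i) + (-a) • (x (i+1) * y j) + (b*c) • (x i * y (j+1)) := by
      linear_combination (norm := module) h
    have h2 : x i * y j = ((a * c - b) / (a - b * c)) • (y j * x i) + (a*c/(a-b*c)) • (y j * x (i+1))
        + (-b/(a-b*c)) • (y (j+1) * x i) + (-a/(a-b*c)) • (x (i+1) * y j)
        + (b*c/(a-b*c)) • (x i * y (j+1)) := by
      calc x i * y j = (a - b*c)⁻¹ • ((a - b*c) • (x i * y j)) := (inv_smul_smul₀ hd _).symm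
        _ = _ := by rw [h3]; match_scalars <;> (field_simp <;> ring)
    rw [h2]
    rw [show b * c - a = -(a - b*c) by ring]
    have hd3 : a - c*b ≠ 0 := by rwa [mul_comm c b]
    match_scalars <;> (field_simp <;> ring)
  -- Main induction
  have hmain : ∀ N i j : ℕ, (x i * y j - ((a * c - b) / (a - b * c)) • (y j * x i))
      = (∑ q ∈ Finset.range N, ∑ r ∈ Finset.range (q+1), ((Nat.choose q r : ℂ) * (a / (b * c - a)) ^ (q - r) * (b * c / (a - b * c)) ^ r) • ((a * b * (1 - c ^ 2) / (a - b * c) ^ 2) • (y (j+r) * x (i+(q-r)+1)) - (a * b * (1 - c ^ 2) / (a - b * c) ^ 2) • (y (j+r+1) * x (i+(q-r)))))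
        + ∑ r ∈ Finset.range (N+1), ((Nat.choose N r : ℂ) * (a / (b * c - a)) ^ (N - r) * (b * c / (a - b * c)) ^ r) • (x (i+(N-r)) * y (j+r) - ((a * c - b) / (a - b * c)) • (y (j+r) * x (i+(N-r)))) := by
    intro N
    induction N with
    | zero =>
      intro i j
      simp
    | succ N ih =>
      intro i j
      rw [ih i j]
      rw [Finset.sum_range_succ
        (f := fun q => ∑ r ∈ Finset.range (q+1), ((Nat.choose q r : ℂ) * (a / (b * c - a)) ^ (q - r) * (b * c / (a - b * c)) ^ r) • ((a * b * (1 - c ^ 2) / (a - b * c) ^ 2) • (y (j+r) * x (i+(q-r)+1)) - (a * b * (1 - c ^ 2) / (a - b * c) ^ 2) • (y (j+r+1) * x (i+(q-r)))))]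
      have key : ∀ r ∈ Finset.range (N+1), ((Nat.choose N r : ℂ) * (a / (b * c - a)) ^ (N - r) * (b * c / (a - b * c)) ^ r) • (x (i+(N-r)) * y (j+r) - ((a * c - b) / (a - b * c)) • (y (j+r) * x (i+(N-r))))
          = ((Nat.choose N r : ℂ) * (a / (b * c - a)) ^ (N - r) * (b * c / (a - b * c)) ^ r) • ((a * b * (1 - c ^ 2) / (a - b * c) ^ 2) • (y (j+r) * x (i+(N-r)+1)) - (a * b * (1 - c ^ 2) / (a - b * c) ^ 2) • (y (j+r+1) * x (i+(N-r))))
            + (((a / (b * c - a)) * ((Nat.choose N r : ℂ) * (a / (b * c - a)) ^ (N - r) * (b * c / (a - b * c)) ^ r)) • (x (i+(N-r)+1) * y (j+r) - ((a * c - b) / (a - b * c)) • (y (j+r) * x (i+(N-r)+1)))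
              + ((b * c / (a - b * c)) * ((Nat.choose N r : ℂ) * (a / (b * c - a)) ^ (N - r) * (b * c / (a - b * c)) ^ r)) • (x (i+(N-r)) * y (j+r+1) - ((a * c - b) / (a - b * c)) • (y (j+r+1) * x (i+(N-r))))) := by
        intro r hr
        rw [hstep (i+(N-r)) (j+r)]
        module
      rw [Finset.sum_congr rfl key, Finset.sum_add_distrib, Finset.sum_add_distrib]
      have hs1 : (∑ r ∈ Finset.range (N+1), ((a / (b * c - a)) * ((Nat.choose N r : ℂ) * (a / (b * c - a)) ^ (N - r) * (b * c / (a - b * c)) ^ r)) • (x (i+(N-r)+1) * y (j+r) - ((a * c - b) / (a - b * c)) • (y (j+r) * x (i+(N-r)+1))))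
          = ∑ r ∈ Finset.range (N+1), ((a / (b * c - a)) * ((Nat.choose N r : ℂ) * (a / (b * c - a)) ^ (N - r) * (b * c / (a - b * c)) ^ r)) • (x (i+(N+1-r)) * y (j+r) - ((a * c - b) / (a - b * c)) • (y (j+r) * x (i+(N+1-r)))) :=
        Finset.sum_congr rfl fun r hr => by
          have hrN : r ≤ N := Nat.lt_succ_iff.mp (Finset.mem_range.mp hr)
          rw [show i+(N-r)+1 = i+(N+1-r) from by omega]
      rw [hs1]
      have hshift : (∑ r ∈ Finset.range (N+1), ((a / (b * c - a)) * ((Nat.choose N r : ℂ) * (a / (b * c - a)) ^ (N - r) * (b * c / (a - b * c)) ^ r)) • (x (i+(N+1-r)) * y (j+r) - ((a * c - b) / (a - b * c)) • (y (j+r) * x (i+(N+1-r)))))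
          + (∑ r ∈ Finset.range (N+1), ((b * c / (a - b * c)) * ((Nat.choose N r : ℂ) * (a / (b * c - a)) ^ (N - r) * (b * c / (a - b * c)) ^ r)) • (x (i+(N-r)) * y (j+r+1) - ((a * c - b) / (a - b * c)) • (y (j+r+1) * x (i+(N-r)))))
          = ∑ r ∈ Finset.range (N+1+1), ((Nat.choose (N+1) r : ℂ) * (a / (b * c - a)) ^ ((N+1) - r) * (b * c / (a - b * c)) ^ r) • (x (i+(N+1-r)) * y (j+r) - ((a * c - b) / (a - b * c)) • (y (j+r) * x (i+(N+1-r)))) :=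
        sum_shift_aux (a / (b * c - a)) (b * c / (a - b * c)) (fun k r => (x (i+k) * y (j+r) - ((a * c - b) / (a - b * c)) • (y (j+r) * x (i+k)))) N
      rw [← hshift]
      abel
  -- Membership of remainder
  have hTmem : ∀ i j : ℕ, (x i * y j - ((a * c - b) / (a - b * c)) • (y j * x i)) ∈ F (i + j) := by
    intro i j
    refine Submodule.sub_mem _ (hmul i j _ (hx i) _ (hy j)) (Submodule.smul_mem _ _ ?_)
    have h := hmul j i _ (hy j) _ (hx i)
    rwa [Nat.add_comm] at h
  have hrem : ∀ N : ℕ, (∑ r ∈ Finset.range (N+1), ((Nat.choose N r : ℂ) * (a / (b * c - a)) ^ (N - r) * (b * c / (a - b * c)) ^ r) • (x (m+(N-r)) * y (n+r) - ((a * c - b) / (a - b * c)) • (y (n+r) * x (m+(N-r)))))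
      ∈ F (m + n + N) := by
    intro N
    refine Submodule.sum_mem _ fun r hr => Submodule.smul_mem _ _ ?_
    have hrN : r ≤ N := Nat.lt_succ_iff.mp (Finset.mem_range.mp hr)
    have h := hTmem (m+(N-r)) (n+r)
    rwa [show m+(N-r) + (n+r) = m+n+N from by omega] at h
  -- per-q sum conversion
  have hq : ∀ q : ℕ, (∑ r ∈ Finset.range (q+1+1), (((c - c⁻¹) / (b * c - a)) * ((((((q+1) : ℕ) : ℂ) - ((r : ℕ) : ℂ)) * (b * c) + ((r : ℕ) : ℂ) * a) / (((q+1) : ℕ) : ℂ)) * ((-1 : ℂ) ^ (r + 1) * (Nat.choose (q+1) r : ℂ) * (b * c) ^ r * a ^ ((q+1) - r) / (b * c - a) ^ (q+1))) • (y (n+r) * x (m+(q+1)-r)))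
      = ∑ r ∈ Finset.range (q+1), ((Nat.choose q r : ℂ) * (a / (b * c - a)) ^ (q - r) * (b * c / (a - b * c)) ^ r) • ((a * b * (1 - c ^ 2) / (a - b * c) ^ 2) • (y (n+r) * x (m+(q-r)+1)) - (a * b * (1 - c ^ 2) / (a - b * c) ^ 2) • (y (n+r+1) * x (m+(q-r)))) := by
    intro q
    rw [Finset.sum_range_succ' (f := fun r => (((c - c⁻¹) / (b * c - a)) * ((((((q+1) : ℕ) : ℂ) - ((r : ℕ) : ℂ)) * (b * c) + ((r : ℕ) : ℂ) * a) / (((q+1) : ℕ) : ℂ)) * ((-1 : ℂ) ^ (r + 1) * (Nat.choose (q+1) r : ℂ) * (b * c) ^ r * a ^ ((q+1) - r) / (b * c - a) ^ (q+1))) • (y (n+r) * x (m+(q+1)-r)))]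
    rw [coef0 a b c hc hd hd' q]
    have hterm : ∀ r ∈ Finset.range (q+1),
        (((c - c⁻¹) / (b * c - a)) * ((((((q+1) : ℕ) : ℂ) - (((r+1) : ℕ) : ℂ)) * (b * c) + (((r+1) : ℕ) : ℂ) * a) / (((q+1) : ℕ) : ℂ)) * ((-1 : ℂ) ^ ((r+1) + 1) * (Nat.choose (q+1) (r+1) : ℂ) * (b * c) ^ (r+1) * a ^ ((q+1) - (r+1)) / (b * c - a) ^ (q+1))) • (y (n+(r+1)) * x (m+(q+1)-(r+1)))
        = ((a * b * (1 - c ^ 2) / (a - b * c) ^ 2) * (((Nat.choose q (r+1) : ℂ) * (a / (b * c - a)) ^ (q - (r+1)) * (b * c / (a - b * c)) ^ (r+1)) - ((Nat.choose q r : ℂ) * (a / (b * c - a)) ^ (q - r) * (b * c / (a - b * c)) ^ r))) • (y (n+r+1) * x (m+(q-r))) := by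
      intro r hr
      have hrq : r ≤ q := Nat.lt_succ_iff.mp (Finset.mem_range.mp hr)
      rw [coef2 a b c ha hb hc hd hd' q r hrq, show m+(q+1)-(r+1) = m+(q-r) from by omega]
      rfl
    rw [Finset.sum_congr rfl hterm]
    have hR : (∑ r ∈ Finset.range (q+1), ((Nat.choose q r : ℂ) * (a / (b * c - a)) ^ (q - r) * (b * c / (a - b * c)) ^ r) • ((a * b * (1 - c ^ 2) / (a - b * c) ^ 2) • (y (n+r) * x (m+(q-r)+1)) - (a * b * (1 - c ^ 2) / (a - b * c) ^ 2) • (y (n+r+1) * x (m+(q-r)))))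
        = (∑ r ∈ Finset.range (q+1), ((a * b * (1 - c ^ 2) / (a - b * c) ^ 2) * ((Nat.choose q r : ℂ) * (a / (b * c - a)) ^ (q - r) * (b * c / (a - b * c)) ^ r)) • (y (n+r) * x (m+(q-r)+1)))
          - ∑ r ∈ Finset.range (q+1), ((a * b * (1 - c ^ 2) / (a - b * c) ^ 2) * ((Nat.choose q r : ℂ) * (a / (b * c - a)) ^ (q - r) * (b * c / (a - b * c)) ^ r)) • (y (n+r+1) * x (m+(q-r))) := by
      rw [← Finset.sum_sub_distrib]
      exact Finset.sum_congr rfl fun r hr => by module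
    rw [hR]
    have hA : (∑ r ∈ Finset.range (q+1), ((a * b * (1 - c ^ 2) / (a - b * c) ^ 2) * ((Nat.choose q r : ℂ) * (a / (b * c - a)) ^ (q - r) * (b * c / (a - b * c)) ^ r)) • (y (n+r) * x (m+(q-r)+1)))
        = (∑ r ∈ Finset.range q, ((a * b * (1 - c ^ 2) / (a - b * c) ^ 2) * ((Nat.choose q (r+1) : ℂ) * (a / (b * c - a)) ^ (q - (r+1)) * (b * c / (a - b * c)) ^ (r+1))) • (y (n+(r+1)) * x (m+(q-(r+1))+1)))
          + ((a * b * (1 - c ^ 2) / (a - b * c) ^ 2) * ((Nat.choose q 0 : ℂ) * (a / (b * c - a)) ^ (q - 0) * (b * c / (a - b * c)) ^ 0)) • (y (n+0) * x (m+(q-0)+1)) :=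
      Finset.sum_range_succ' _ q
    rw [hA]
    have hA2 : (∑ r ∈ Finset.range q, ((a * b * (1 - c ^ 2) / (a - b * c) ^ 2) * ((Nat.choose q (r+1) : ℂ) * (a / (b * c - a)) ^ (q - (r+1)) * (b * c / (a - b * c)) ^ (r+1))) • (y (n+(r+1)) * x (m+(q-(r+1))+1)))
        = ∑ r ∈ Finset.range q, ((a * b * (1 - c ^ 2) / (a - b * c) ^ 2) * ((Nat.choose q (r+1) : ℂ) * (a / (b * c - a)) ^ (q - (r+1)) * (b * c / (a - b * c)) ^ (r+1))) • (y (n+r+1) * x (m+(q-r))) :=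
      Finset.sum_congr rfl fun r hr => by
        have hrq : r < q := Finset.mem_range.mp hr
        rw [show m+(q-(r+1))+1 = m+(q-r) from by omega]
        rfl
    rw [hA2]
    have hA3 : ((a * b * (1 - c ^ 2) / (a - b * c) ^ 2) * ((Nat.choose q 0 : ℂ) * (a / (b * c - a)) ^ (q - 0) * (b * c / (a - b * c)) ^ 0)) • (y (n+0) * x (m+(q-0)+1))
        = ((a * b * (1 - c ^ 2) / (a - b * c) ^ 2) * ((Nat.choose q 0 : ℂ) * (a / (b * c - a)) ^ (q - 0) * (b * c / (a - b * c)) ^ 0)) • (y (n+0) * x (m+(q+1)-0)) := by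
      rw [show m+(q-0)+1 = m+(q+1)-0 from by omega]
    rw [hA3]
    have hB : (∑ r ∈ Finset.range (q+1), ((a * b * (1 - c ^ 2) / (a - b * c) ^ 2) * (((Nat.choose q (r+1) : ℂ) * (a / (b * c - a)) ^ (q - (r+1)) * (b * c / (a - b * c)) ^ (r+1)) - ((Nat.choose q r : ℂ) * (a / (b * c - a)) ^ (q - r) * (b * c / (a - b * c)) ^ r))) • (y (n+r+1) * x (m+(q-r))))
        = (∑ r ∈ Finset.range (q+1), ((a * b * (1 - c ^ 2) / (a - b * c) ^ 2) * ((Nat.choose q (r+1) : ℂ) * (a / (b * c - a)) ^ (q - (r+1)) * (b * c / (a - b * c)) ^ (r+1))) • (y (n+r+1) * x (m+(q-r))))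
          - ∑ r ∈ Finset.range (q+1), ((a * b * (1 - c ^ 2) / (a - b * c) ^ 2) * ((Nat.choose q r : ℂ) * (a / (b * c - a)) ^ (q - r) * (b * c / (a - b * c)) ^ r)) • (y (n+r+1) * x (m+(q-r))) := by
      rw [← Finset.sum_sub_distrib]
      exact Finset.sum_congr rfl fun r hr => by module
    rw [hB]
    have hC : (∑ r ∈ Finset.range (q+1), ((a * b * (1 - c ^ 2) / (a - b * c) ^ 2) * ((Nat.choose q (r+1) : ℂ) * (a / (b * c - a)) ^ (q - (r+1)) * (b * c / (a - b * c)) ^ (r+1))) • (y (n+r+1) * x (m+(q-r))))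
        = ∑ r ∈ Finset.range q, ((a * b * (1 - c ^ 2) / (a - b * c) ^ 2) * ((Nat.choose q (r+1) : ℂ) * (a / (b * c - a)) ^ (q - (r+1)) * (b * c / (a - b * c)) ^ (r+1))) • (y (n+r+1) * x (m+(q-r))) := by
      rw [Finset.sum_range_succ]
      have hz : ((a * b * (1 - c ^ 2) / (a - b * c) ^ 2) * ((Nat.choose q (q+1) : ℂ) * (a / (b * c - a)) ^ (q - (q+1)) * (b * c / (a - b * c)) ^ (q+1))) • (y (n+q+1) * x (m+(q-q))) = 0 := by
        simp [Nat.choose_succ_self]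
      rw [hz, add_zero]
    rw [hC]
    abel
  -- Icc conversion
  have hIcc : ∀ N : ℕ, (∑ p ∈ Finset.Icc 1 N, ∑ r ∈ Finset.range (p+1),
        (((c - c⁻¹) / (b * c - a)) * (((((p : ℕ) : ℂ) - ((r : ℕ) : ℂ)) * (b * c) + ((r : ℕ) : ℂ) * a) / ((p : ℕ) : ℂ)) * ((-1 : ℂ) ^ (r + 1) * (Nat.choose p r : ℂ) * (b * c) ^ r * a ^ (p - r) / (b * c - a) ^ p)) • (y (n+r) * x (m+p-r)))
      = ∑ q ∈ Finset.range N, ∑ r ∈ Finset.range (q+1), ((Nat.choose q r : ℂ) * (a / (b * c - a)) ^ (q - r) * (b * c / (a - b * c)) ^ r) • ((a * b * (1 - c ^ 2) / (a - b * c) ^ 2) • (y (n+r) * x (m+(q-r)+1)) - (a * b * (1 - c ^ 2) / (a - b * c) ^ 2) • (y (n+r+1) * x (m+(q-r)))) := by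
    intro N
    rw [← Finset.Ico_add_one_right_eq_Icc, Finset.sum_Ico_eq_sum_range, show N+1-1 = N from rfl]
    refine Finset.sum_congr rfl fun q hq' => ?_
    rw [show 1+q = q+1 from by omega]
    exact hq q
  -- PS identity
  have hPS : ∀ N : ℕ,
      (((b - a * c) / (b * c - a)) • (y n * x m) +
          ∑ p ∈ Finset.Icc 1 N, ∑ r ∈ Finset.range (p + 1),
            (((c - c⁻¹) / (b * c - a)) * ((((p : ℂ) - (r : ℂ)) * (b * c) + (r : ℂ) * a) / (p : ℂ)) *
                ((-1 : ℂ) ^ (r + 1) * (Nat.choose p r : ℂ) * (b * c) ^ r * a ^ (p - r) /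
                  (b * c - a) ^ p)) •
              (y (n + r) * x (m + p - r)))
      = x m * y n - ∑ r ∈ Finset.range (N+1), ((Nat.choose N r : ℂ) * (a / (b * c - a)) ^ (N - r) * (b * c / (a - b * c)) ^ r) • (x (m+(N-r)) * y (n+r) - ((a * c - b) / (a - b * c)) • (y (n+r) * x (m+(N-r)))) := by
    intro N
    rw [show ((b - a * c) / (b * c - a)) = ((a * c - b) / (a - b * c)) from by rw [div_eq_div_iff hd' hd]; ring]
    rw [hIcc N]
    linear_combination (norm := module) (hmain N m n).symm
  -- limits
  have h0 : Filter.Tendsto (fun N : ℕ => ∑ r ∈ Finset.range (N+1),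
      ((Nat.choose N r : ℂ) * (a / (b * c - a)) ^ (N - r) * (b * c / (a - b * c)) ^ r) • (x (m+(N-r)) * y (n+r) - ((a * c - b) / (a - b * c)) • (y (n+r) * x (m+(N-r))))) Filter.atTop (nhds 0) := by
    rw [hbasis.tendsto_right_iff]
    intro i _
    filter_upwards [Filter.eventually_ge_atTop i] with N hN
    exact hmono i (m+n+N) (by omega) (hrem N)
  have h2 : Filter.Tendsto (fun N : ℕ => x m * y n - ∑ r ∈ Finset.range (N+1),
      ((Nat.choose N r : ℂ) * (a / (b * c - a)) ^ (N - r) * (b * c / (a - b * c)) ^ r) • (x (m+(N-r)) * y (n+r) - ((a * c - b) / (a - b * c)) • (y (n+r) * x (m+(N-r))))) Filter.atTop (nhds (x m * y n)) := by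
    simpa using tendsto_const_nhds.sub h0
  exact Filter.Tendsto.congr (fun N => (hPS N).symm) h2
end

section
/- Sticking-graph cycle lemma (rank 2): fix $i \neq j$ with $B_{ij} \neq 0$ entries of a rank-2 symmetrized Cartan matrix of type $A_2$, $B_2$, or $G_2$, let $s = 1 - C_{ij}$, and let $a_1,\dots,a_s, b \in \mathbb{C}^{\times}$ with $q$ transcendental. Define a directed graph on the multiset $\{(i,a_1),\dots,(i,a_s),(j,b)\}$ with an edge $(i',a)\to(j',b')$ iff $a = b' q^{-B_{i'j'}}$ and $B_{i'j'}\neq 0$. Then this graph contains a directed cycle if and only if there is a permutation $\sigma \in \Sigma_s$ with $a_{\sigma(t)} = b\,q^{B_{ij} + (t-1)B_{ii}}$ for all $1 \leq t \leq s$, in which case the whole graph is a single directed $(s{+}1)$-cycle. -/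
/-- The vertex `none` is `(j, b)`; the vertex `some t` is `(i, a t)`. -/
noncomputable def ptFn (s : ℕ) (a : Fin s → ℂ) (b : ℂ) : Option (Fin s) → ℂ
  | none => b
  | some t => a t

/-- The entry of the symmetrized Cartan matrix attached to the colours of a pair of
vertices: `Bii` between two `i`-vertices, `Bjj` between two `j`-vertices, `Bij`
between vertices of different colours. -/
def BvFn (s : ℕ) (Bii Bjj Bij : ℤ) : Option (Fin s) → Option (Fin s) → ℤ
  | some _, some _ => Bii
  | none, none => Bjj
  | _, _ => Bij

/-- The sticking relation: `(i', x)` sticks to the left of `(j', y)` iff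
`x = y q^{-B_{i'j'}}` and `B_{i'j'} ≠ 0`. -/
noncomputable def stickRel (s : ℕ) (a : Fin s → ℂ) (b q : ℂ) (Bii Bjj Bij : ℤ)
    (v w : Option (Fin s)) : Prop :=
  BvFn s Bii Bjj Bij v w ≠ 0 ∧
    ptFn s a b v = ptFn s a b w * q ^ (-(BvFn s Bii Bjj Bij v w))

lemma trans_ne_zero {q : ℂ} (hq : Transcendental ℚ q) : q ≠ 0 := by
  rintro rfl; exact hq isAlgebraic_zero

lemma trans_zpow_inj {q : ℂ} (hq : Transcendental ℚ q) {m n : ℤ} (h : q ^ m = q ^ n) :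
    m = n := by
  have hq0 : q ≠ 0 := trans_ne_zero hq
  by_contra hne
  have h1 : q ^ (m - n) = 1 := by
    rw [zpow_sub₀ hq0, h, div_self (zpow_ne_zero _ hq0)]
  have h2 : ∃ j : ℕ, 0 < j ∧ q ^ (j : ℕ) = 1 := by
    rcases lt_or_gt_of_ne hne with hlt | hgt
    · refine ⟨(n - m).toNat, by omega, ?_⟩
      have h3 : q ^ (n - m) = 1 := by
        rw [show n - m = -(m - n) by ring, zpow_neg, h1, inv_one]
      rw [← zpow_natCast, Int.toNat_of_nonneg (by omega)]
      exact h3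
    · refine ⟨(m - n).toNat, by omega, ?_⟩
      rw [← zpow_natCast, Int.toNat_of_nonneg (by omega)]
      exact h1
  obtain ⟨j, hj, hqj⟩ := h2
  exact hq ⟨Polynomial.X ^ j - 1,
    by simpa using Polynomial.X_pow_sub_C_ne_zero hj (1 : ℚ),
    by simp [hqj]⟩

section StickAux

variable {α : Type*} {R : Option α → Option α → Prop}

/-- An `R`-path whose intermediate vertices are all of the form `some _`. -/
def stickNN (R : Option α → Option α → Prop) (v w : Option α) : Prop :=
  R v w ∨ ∃ u u' : α, R v (some u) ∧
    Relation.ReflTransGen (fun x y => R (some x) (some y)) u u' ∧ R (some u') w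

lemma stickNN.transGen {v w : Option α} (h : stickNN R v w) : Relation.TransGen R v w := by
  rcases h with h | ⟨u, u', h1, h2, h3⟩
  · exact Relation.TransGen.single h
  · have h2' : Relation.ReflTransGen R (some u) (some u') :=
      Relation.ReflTransGen.lift some (fun _ _ hxy => hxy) _ _ h2
    exact Relation.TransGen.head h1 (Relation.TransGen.trans_right h2'
      (Relation.TransGen.single h3))

lemma stickNN.tail {v w : Option α} {u : α} (h : stickNN R v (some u)) (h2 : R (some u) w) :
    stickNN R v w := by
  rcases h with h | ⟨u1, u1', h1, hrt, h3⟩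
  · exact Or.inr ⟨u, u, h, Relation.ReflTransGen.refl, h2⟩
  · exact Or.inr ⟨u1, u, h1, hrt.tail h3, h2⟩

lemma stick_decomp {v w : Option α} (h : Relation.TransGen R v w) :
    stickNN R v w ∨ (stickNN R v none ∧ Relation.TransGen R none w) := by
  induction h with
  | single h => exact Or.inl (Or.inl h)
  | @tail x y h1 h2 ih =>
    rcases x with _ | u
    · rcases ih with h | ⟨hnn, htg⟩
      · exact Or.inr ⟨h, Relation.TransGen.single h2⟩
      · exact Or.inr ⟨hnn, htg.tail h2⟩
    · rcases ih with h | ⟨hnn, htg⟩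
      · exact Or.inl (h.tail h2)
      · exact Or.inr ⟨hnn, htg.tail h2⟩

end StickAux

lemma stick_chain {α : Type*} {q : ℂ} (hq0 : q ≠ 0) (f : α → ℂ) (B : ℤ)
    {u u' : α}
    (h : Relation.ReflTransGen (fun x y : α => f x = f y * q ^ (-B)) u u') :
    ∃ (k : ℕ) (c : Fin (k + 1) → α), c 0 = u ∧ c (Fin.last k) = u' ∧
      ∀ r : Fin (k + 1), f (c r) = f u * q ^ ((r : ℤ) * B) := by
  induction h with
  | refl =>
    refine ⟨0, fun _ => u, rfl, rfl, ?_⟩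
    intro r
    have hr := r.isLt
    have hr0 : (r : ℕ) = 0 := by omega
    simp [hr0]
  | @tail x y h1 h2 ih =>
    obtain ⟨k, c, hc0, hcl, hval⟩ := ih
    refine ⟨k + 1, Fin.snoc c y, ?_, by simp, ?_⟩
    · rw [show (0 : Fin (k + 1 + 1)) = Fin.castSucc 0 by rfl, Fin.snoc_castSucc, hc0]
    · intro r
      induction r using Fin.lastCases with
      | last =>
        have hx : f x = f u * q ^ ((k : ℤ) * B) := by
          rw [← hcl]; simpa using hval (Fin.last k)
        have hy : f y = f x * q ^ (B : ℤ) := by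
          rw [h2, mul_assoc, ← zpow_add₀ hq0]
          simp
        rw [Fin.snoc_last, hy, hx, mul_assoc, ← zpow_add₀ hq0]
        have he : ((Fin.last (k + 1) : ℕ) : ℤ) * B = (k : ℤ) * B + B := by
          rw [Fin.val_last]; push_cast; ring
        rw [he]
      | cast r =>
        rw [Fin.snoc_castSucc]
        simpa using hval r

/-- Sticking-graph cycle lemma in rank 2 (Lemma 5.3 of the paper): for a rank-2
symmetrized Cartan matrix of type `A₂`, `B₂/C₂` or `G₂`, `s = 1 - C_ij` (encoded by
`Bii (s - 1) = -2 Bij`), and `q` transcendental, the sticking graph of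
`{(i,a₁),…,(i,a_s),(j,b)}` contains a directed cycle iff there is `σ ∈ Σ_s` with
`a_{σ(t)} = b q^{B_ij + (t-1) B_ii}` for all `t`; in that case the whole graph is the
single directed `(s+1)`-cycle `(j,b) → (i,a_{σ(1)}) → ⋯ → (i,a_{σ(s)}) → (j,b)`. -/
theorem stmt_19 (q : ℂ) (hq : Transcendental ℚ q)
    (Bii Bjj Bij : ℤ)
    (hcase : (Bii = 2 ∧ Bjj = 2 ∧ Bij = -1) ∨ (Bii = 2 ∧ Bjj = 4 ∧ Bij = -2) ∨
      (Bii = 4 ∧ Bjj = 2 ∧ Bij = -2) ∨ (Bii = 2 ∧ Bjj = 6 ∧ Bij = -3) ∨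
      (Bii = 6 ∧ Bjj = 2 ∧ Bij = -3))
    (s : ℕ) (hs : Bii * ((s : ℤ) - 1) = -2 * Bij)
    (a : Fin s → ℂ) (b : ℂ) (ha : ∀ t, a t ≠ 0) (hb : b ≠ 0) :
    ((∃ v, Relation.TransGen (stickRel s a b q Bii Bjj Bij) v v) ↔
      ∃ σ : Equiv.Perm (Fin s), ∀ t : Fin s, a (σ t) = b * q ^ (Bij + (t : ℤ) * Bii)) ∧
    (∀ σ : Equiv.Perm (Fin s), (∀ t : Fin s, a (σ t) = b * q ^ (Bij + (t : ℤ) * Bii)) →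
      ∀ v w : Option (Fin s), stickRel s a b q Bii Bjj Bij v w ↔
        ((v = none ∧ ∃ h : 0 < s, w = some (σ ⟨0, h⟩)) ∨
         (∃ u : Fin s, v = some u ∧
           ((∃ h : ((σ.symm u : ℕ) + 1) < s, w = some (σ ⟨(σ.symm u : ℕ) + 1, h⟩)) ∨
            (((σ.symm u : ℕ) + 1 = s) ∧ w = none))))) := by
  have hq0 : q ≠ 0 := trans_ne_zero hq
  have hinj : ∀ {m n : ℤ}, q ^ m = q ^ n → m = n := fun {m n} h => trans_zpow_inj hq h
  obtain ⟨hBii, hBjj, hBij⟩ : 0 < Bii ∧ 0 < Bjj ∧ Bij < 0 := by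
    rcases hcase with ⟨h1, h2, h3⟩ | ⟨h1, h2, h3⟩ | ⟨h1, h2, h3⟩ | ⟨h1, h2, h3⟩ | ⟨h1, h2, h3⟩ <;>
      exact ⟨by omega, by omega, by omega⟩
  have hs2 : 2 ≤ s := by
    have h1 : 0 < (s : ℤ) - 1 := by nlinarith
    omega
  have hcanc : ∀ {x y : ℤ}, b * q ^ x = b * q ^ y ↔ x = y := by
    intro x y
    exact ⟨fun h => hinj (mul_left_cancel₀ hb h), fun h => by rw [h]⟩
  have hRs : ∀ x y : Fin s, stickRel s a b q Bii Bjj Bij (some x) (some y) →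
      a x = a y * q ^ (-Bii) := by
    intro x y hxy
    simpa [stickRel, ptFn, BvFn] using hxy.2
  constructor
  · constructor
    · -- cycle → permutation
      rintro ⟨v, hv⟩
      have hacanc : ∀ (u : Fin s) (x y : ℤ), a u * q ^ x = a u * q ^ y → x = y := by
        intro u x y h
        exact hinj (mul_left_cancel₀ (ha u) h)
      have hNoI : ∀ u0 : Fin s,
          stickNN (stickRel s a b q Bii Bjj Bij) (some u0) (some u0) → False := by
        intro u0 h
        rcases h with h | ⟨u, u', h1, h2, h3⟩
        · have h4 := hRs _ _ h
          have h5 : a u0 * q ^ (0 : ℤ) = a u0 * q ^ (-Bii) := by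
            rw [zpow_zero, mul_one]; exact h4
          have := hacanc u0 _ _ h5
          omega
        · obtain ⟨k, c, hc0, hcl, hval⟩ := stick_chain hq0 a Bii (Relation.ReflTransGen.mono hRs _ _ h2)
          have hA : a u' = a u * q ^ ((k : ℤ) * Bii) := by
            rw [← hcl]; simpa using hval (Fin.last k)
          have hB : a u' = a u0 * q ^ (-Bii) := hRs _ _ h3
          have hC : a u0 = a u * q ^ (-Bii) := hRs _ _ h1
          have hD : a u * q ^ ((k : ℤ) * Bii) = a u * q ^ (-Bii + -Bii) := by
            rw [← hA, hB, hC, mul_assoc, zpow_add₀ hq0]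
          have hE := hacanc u _ _ hD
          nlinarith [mul_nonneg (Int.natCast_nonneg k) hBii.le]
      have htop : Relation.TransGen (stickRel s a b q Bii Bjj Bij) none none := by
        rcases stick_decomp hv with h | ⟨h1, h2⟩
        · rcases v with _ | u0
          · exact h.transGen
          · exact (hNoI u0 h).elim
        · exact h2.trans h1.transGen
      have hnn : stickNN (stickRel s a b q Bii Bjj Bij) none none := by
        rcases stick_decomp htop with h | ⟨h1, _⟩
        · exact h
        · exact h1
      rcases hnn with h | ⟨u, u', h1, h2, h3⟩
      · obtain ⟨hne, heq⟩ := h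
        simp only [ptFn, BvFn] at hne heq
        have h5 : b * q ^ (0 : ℤ) = b * q ^ (-Bjj) := by
          rw [zpow_zero, mul_one]; exact heq
        have := hcanc.mp h5
        omega
      · obtain ⟨k, c, hc0, hcl, hval⟩ := stick_chain hq0 a Bii (Relation.ReflTransGen.mono hRs _ _ h2)
        have hu : a u = b * q ^ (Bij : ℤ) := by
          have h4 := h1.2
          simp only [ptFn, BvFn] at h4
          rw [h4, mul_assoc, ← zpow_add₀ hq0]
          simp
        have hval' : ∀ r : Fin (k + 1), a (c r) = b * q ^ (Bij + (r : ℤ) * Bii) := by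
          intro r
          rw [hval r, hu, mul_assoc, ← zpow_add₀ hq0]
        have hu' : a u' = b * q ^ (-Bij) := by
          have h4 := h3.2
          simpa only [ptFn, BvFn] using h4
        have hk : (k : ℤ) * Bii = -2 * Bij := by
          have h4 : b * q ^ (Bij + (k : ℤ) * Bii) = b * q ^ (-Bij) := by
            rw [← hu', ← hcl]
            simpa using (hval' (Fin.last k)).symm
          have h5 := hcanc.mp h4
          linarith
        have hks : k + 1 = s := by
          have h6 : (k : ℤ) * Bii = ((s : ℤ) - 1) * Bii := by linarith [hs]
          have h7 : (k : ℤ) = (s : ℤ) - 1 := mul_right_cancel₀ hBii.ne' h6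
          omega
        subst hks
        have hcinj : Function.Injective c := by
          intro r r' hrr
          have h6 : b * q ^ (Bij + (r : ℤ) * Bii) = b * q ^ (Bij + (r' : ℤ) * Bii) := by
            rw [← hval' r, ← hval' r', hrr]
          have h7 := hcanc.mp h6
          have h8 : (r : ℤ) * Bii = (r' : ℤ) * Bii := by linarith
          have h9 : (r : ℤ) = (r' : ℤ) := mul_right_cancel₀ hBii.ne' h8
          exact Fin.ext (by exact_mod_cast h9)
        exact ⟨Equiv.ofBijective c (Finite.injective_iff_bijective.mp hcinj),
          fun t => hval' t⟩
    · -- permutation → cycle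
      rintro ⟨σ, hσ⟩
      refine ⟨none, ?_⟩
      have h0s : 0 < s := by omega
      have e1 : stickRel s a b q Bii Bjj Bij none (some (σ ⟨0, h0s⟩)) := by
        refine ⟨by simp only [BvFn]; omega, ?_⟩
        simp only [ptFn, BvFn]
        rw [hσ ⟨0, h0s⟩, mul_assoc, ← zpow_add₀ hq0]
        norm_num
      have estep : ∀ k : ℕ, ∀ hk : k + 1 < s,
          stickRel s a b q Bii Bjj Bij (some (σ ⟨k, by omega⟩)) (some (σ ⟨k + 1, hk⟩)) := by
        intro k hk
        refine ⟨by simp only [BvFn]; omega, ?_⟩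
        simp only [ptFn, BvFn]
        rw [hσ ⟨k, by omega⟩, hσ ⟨k + 1, hk⟩, mul_assoc, ← zpow_add₀ hq0]
        refine hcanc.mpr ?_
        push_cast
        ring
      have elast : stickRel s a b q Bii Bjj Bij (some (σ ⟨s - 1, by omega⟩)) none := by
        refine ⟨by simp only [BvFn]; omega, ?_⟩
        simp only [ptFn, BvFn]
        rw [hσ ⟨s - 1, by omega⟩]
        refine hcanc.mpr ?_
        have hc : ((⟨s - 1, by omega⟩ : Fin s) : ℤ) = (s : ℤ) - 1 := by
          simp only [Fin.val_mk]
          omega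
        rw [hc]
        linear_combination hs
      have hchain : ∀ k : ℕ, ∀ hk : k < s,
          Relation.TransGen (stickRel s a b q Bii Bjj Bij) none (some (σ ⟨k, hk⟩)) := by
        intro k
        induction k with
        | zero => intro hk; exact Relation.TransGen.single e1
        | succ n ih => intro hk; exact (ih (by omega)).tail (estep n hk)
      exact (hchain (s - 1) (by omega)).tail elast
  · -- edge characterization
    intro σ hσ v w
    have hval : ∀ u : Fin s, a u = b * q ^ (Bij + ((σ.symm u : ℕ) : ℤ) * Bii) := by
      intro u
      have h := hσ (σ.symm u)
      simpa using h
    rcases v with _ | u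
    · rcases w with _ | u
      · -- none, none
        constructor
        · intro hsr
          have h2 := hsr.2
          simp only [ptFn, BvFn] at h2
          have h3 : b * q ^ (0 : ℤ) = b * q ^ (-Bjj) := by
            rw [zpow_zero, mul_one]; exact h2
          have h4 := hcanc.mp h3
          have h1 := hsr.1
          simp only [BvFn] at h1
          omega
        · rintro (⟨h9, h0, hw⟩ | ⟨u1, hu1, -⟩)
          · exact absurd hw (by simp)
          · exact absurd hu1 (by simp)
      · -- none, some u
        constructor
        · intro hsr
          have h2 := hsr.2
          simp only [ptFn, BvFn] at h2
          rw [hval u, mul_assoc, ← zpow_add₀ hq0] at h2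
          have h3 : b * q ^ (0 : ℤ) = b * q ^ (Bij + ((σ.symm u : ℕ) : ℤ) * Bii + -Bij) := by
            rw [zpow_zero, mul_one]; exact h2
          have h4 := hcanc.mp h3
          have h5 : ((σ.symm u : ℕ) : ℤ) * Bii = 0 := by linarith
          have h6 : ((σ.symm u : ℕ) : ℤ) = 0 := by
            rcases mul_eq_zero.mp h5 with h | h
            · exact h
            · omega
          refine Or.inl ⟨rfl, ⟨by omega, ?_⟩⟩
          have h7 : σ.symm u = ⟨0, by omega⟩ := Fin.ext (by exact_mod_cast h6)
          rw [← h7]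
          simp
        · rintro (⟨-, h0, hw⟩ | ⟨u1, hu1, -⟩)
          · obtain rfl : u = σ ⟨0, h0⟩ := Option.some.inj hw
            refine ⟨by simp only [BvFn]; omega, ?_⟩
            simp only [ptFn, BvFn]
            rw [hσ ⟨0, h0⟩, mul_assoc, ← zpow_add₀ hq0]
            norm_num
          · exact absurd hu1 (by simp)
    · rcases w with _ | u'
      · -- some u, none
        constructor
        · intro hsr
          have h2 := hsr.2
          simp only [ptFn, BvFn] at h2
          rw [hval u] at h2
          have h4 := hcanc.mp h2
          have h5 : ((σ.symm u : ℕ) : ℤ) * Bii = ((s : ℤ) - 1) * Bii := by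
            linear_combination h4 - hs
          have h6 : ((σ.symm u : ℕ) : ℤ) = (s : ℤ) - 1 := mul_right_cancel₀ hBii.ne' h5
          exact Or.inr ⟨u, rfl, Or.inr ⟨by omega, rfl⟩⟩
        · rintro (⟨hv, -⟩ | ⟨u1, hu1, (⟨hlt, hw⟩ | ⟨hlast, -⟩)⟩)
          · exact absurd hv (by simp)
          · exact absurd hw (by simp)
          · obtain rfl : u = u1 := Option.some.inj hu1
            refine ⟨by simp only [BvFn]; omega, ?_⟩
            simp only [ptFn, BvFn]
            rw [hval u]
            refine hcanc.mpr ?_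
            have hc : ((σ.symm u : ℕ) : ℤ) = (s : ℤ) - 1 := by omega
            rw [hc]
            linear_combination hs
      · -- some u, some u'
        constructor
        · intro hsr
          have h2 := hsr.2
          simp only [ptFn, BvFn] at h2
          rw [hval u, hval u', mul_assoc, ← zpow_add₀ hq0] at h2
          have h4 := hcanc.mp h2
          have h5 : ((σ.symm u : ℕ) : ℤ) + 1 = ((σ.symm u' : ℕ) : ℤ) := by
            have h6 : (((σ.symm u : ℕ) : ℤ) + 1) * Bii = ((σ.symm u' : ℕ) : ℤ) * Bii := by
              linear_combination h4
            exact mul_right_cancel₀ hBii.ne' h6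
          have hlt' := (σ.symm u').isLt
          have hlt : (σ.symm u : ℕ) + 1 < s := by omega
          refine Or.inr ⟨u, rfl, Or.inl ⟨hlt, ?_⟩⟩
          have h7 : σ.symm u' = ⟨(σ.symm u : ℕ) + 1, hlt⟩ := Fin.ext (by push_cast; omega)
          rw [show u' = σ (σ.symm u') by simp, h7]
        · rintro (⟨hv, -⟩ | ⟨u1, hu1, (⟨hlt, hw⟩ | ⟨-, hw⟩)⟩)
          · exact absurd hv (by simp)
          · obtain rfl : u = u1 := Option.some.inj hu1
            obtain rfl : u' = σ ⟨(σ.symm u : ℕ) + 1, hlt⟩ := Option.some.inj hw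
            refine ⟨by simp only [BvFn]; omega, ?_⟩
            simp only [ptFn, BvFn]
            rw [hval u, hσ ⟨(σ.symm u : ℕ) + 1, hlt⟩, mul_assoc, ← zpow_add₀ hq0]
            refine hcanc.mpr ?_
            push_cast
            ring
          · exact absurd hw (by simp)
end
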